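/- Let p be an odd prime and let v ∈ 𝔽_2^p be a non-symmetric vector with v_0 = 0, coordinates indexed by ℤ/pℤ. Suppose there exist simultaneously i with v_i = v_{−i} = 1 and j ≠ 0 with v_j = v_{−j} = 0. Then there exists a subset S ⊆ ℤ/pℤ of odd cardinality such that either for every i ∈ S the number of j ∈ S with v_{j−i} = 1 is odd, or for every i ∈ S the number of j ∈ S with v_{i−j} = 1 is odd. In particular, v and ê do not work together. -/

import Mathlib

/-! Call `y` two-way if `v y = v (-y) = 1`, no-way if `v y = v (-y) = 0` (so `0` is no-way)
and one-way otherwise. Without a bad subgraph, a no-way `x` plus a two-way `y` is never one-way: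
otherwise `{0, y, x + y}` is bad. By Cauchy–Davenport every two-way element is then the sum of a
two-way and a one-way element, and from this one shows that the two-way elements are closed under
adding no-way elements. Adding a nonzero no-way element repeatedly would make every residue
two-way, including `0`.

A bad `S` defeats `ê`: the indicator of `S` (or of `-S`) has odd weight, so a shift orthogonal to
`ê` puts a vertex of `S` at the origin, and the odd degree of that vertex makes the shift
non-orthogonal to `v`. -/

def cshift {n : ℕ} (x : ZMod n → ZMod 2) : ZMod n → ZMod 2 := fun i => x (i - 1)

def dot {n : ℕ} [NeZero n] (v x : ZMod n → ZMod 2) : ZMod 2 := ∑ i, v i * x i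

def Works {n : ℕ} [NeZero n] (v : ZMod n → ZMod 2) : Prop :=
  ∀ x : ZMod n → ZMod 2, ∃ k : ℕ, dot v (cshift^[k] x) = 0

def WorkTogether2 {n : ℕ} [NeZero n] (v w : ZMod n → ZMod 2) : Prop :=
  ∀ x : ZMod n → ZMod 2, ∃ k : ℕ,
    dot v (cshift^[k] x) = 0 ∧ dot w (cshift^[k] x) = 0

def ehat (n : ℕ) : ZMod n → ZMod 2 := fun i => if i = 0 then 0 else 1

open Finset Pointwise

section CayleyDigraph

variable {G : Type*} [AddCommGroup G] (v : G → ZMod 2)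

def IsTwoWay (y : G) : Prop := v y = 1 ∧ v (-y) = 1

def IsNoWay (x : G) : Prop := v x = 0 ∧ v (-x) = 0

def IsOneWay (w : G) : Prop := v w ≠ v (-w)

variable {v}

theorem IsTwoWay.neg {y : G} (hy : IsTwoWay v y) : IsTwoWay v (-y) := ⟨hy.2, by simpa using hy.1⟩

theorem IsNoWay.neg {x : G} (hx : IsNoWay v x) : IsNoWay v (-x) := ⟨hx.2, by simpa using hx.1⟩

theorem IsOneWay.neg {w : G} (hw : IsOneWay v w) : IsOneWay v (-w) := by
  simpa [IsOneWay, eq_comm] using hw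

theorem isTwoWay_neg {y : G} : IsTwoWay v (-y) ↔ IsTwoWay v y :=
  ⟨fun h => by simpa using h.neg, IsTwoWay.neg⟩

theorem isOneWay_neg {w : G} : IsOneWay v (-w) ↔ IsOneWay v w :=
  ⟨fun h => by simpa using h.neg, IsOneWay.neg⟩

theorem IsOneWay.eq_zero_and_eq_one_or {w : G} (hw : IsOneWay v w) :
    (v w = 0 ∧ v (-w) = 1) ∨ (v w = 1 ∧ v (-w) = 0) := by
  revert hw
  unfold IsOneWay
  generalize v w = a, v (-w) = b
  revert a b
  decide

theorem IsTwoWay.ne_zero (h0 : v 0 = 0) {y : G} (hy : IsTwoWay v y) : y ≠ 0 := by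
  rintro rfl; simp [IsTwoWay, h0] at hy

theorem IsOneWay.ne_zero {w : G} (hw : IsOneWay v w) : w ≠ 0 := by
  rintro rfl; simp [IsOneWay] at hw

theorem IsTwoWay.not_isNoWay {y : G} (hy : IsTwoWay v y) : ¬ IsNoWay v y :=
  fun hx => one_ne_zero (hy.1.symm.trans hx.1)

theorem isTwoWay_or_isNoWay_of_not_isOneWay {w : G} (hw : ¬ IsOneWay v w) :
    IsTwoWay v w ∨ IsNoWay v w := by
  simp only [IsOneWay, not_not] at hw
  simp only [IsTwoWay, IsNoWay, ← hw, and_self]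
  generalize v w = a
  revert a
  decide

variable (v) in
def IsBadSubgraph (S : Finset G) : Prop :=
  Odd S.card ∧ ((∀ i ∈ S, Odd (S.filter (fun j => v (j - i) = 1)).card) ∨
    (∀ i ∈ S, Odd (S.filter (fun j => v (i - j) = 1)).card))

theorem isBadSubgraph_neg_comp_iff {S : Finset G} :
    IsBadSubgraph (fun i => v (-i)) S ↔ IsBadSubgraph v S := by
  simp only [IsBadSubgraph, neg_sub, or_comm]

/-- In `{0, y, x + y}` the arcs are `0 ⇄ y` and `x + y → 0`, so every vertex has outdegree one. -/
theorem isBadSubgraph_triangle [DecidableEq G] (h0 : v 0 = 0) {x y : G} (hx : IsNoWay v x)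
    (hy : IsTwoWay v y) (h₁ : v (x + y) = 0) (h₂ : v (-(x + y)) = 1) :
    IsBadSubgraph v {0, y, x + y} := by
  have h0y : 0 ≠ y := fun h => by simp [← h, h0, IsTwoWay] at hy
  have h0xy : 0 ≠ x + y := fun h => by simp [← h, h0] at h₂
  have hyxy : y ≠ x + y := fun h => by rw [← h] at h₁; simp [h₁, IsTwoWay] at hy
  refine ⟨?_, Or.inl ?_⟩
  · rw [card_insert_of_notMem (by simp [h0y, h0xy]), card_pair hyxy]; decide
  · intro i hi
    simp only [mem_insert, mem_singleton] at hi
    rcases hi with rfl | rfl | rfl <;>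
      simp [-neg_add_rev, filter_insert, filter_singleton, h0, hx.1, hx.2, hy.1, hy.2, h₁, h₂]

theorem not_isOneWay_add [DecidableEq G] (h0 : v 0 = 0)
    (hgood : ∀ S : Finset G, ¬ IsBadSubgraph v S) {x y : G} (hx : IsNoWay v x)
    (hy : IsTwoWay v y) : ¬ IsOneWay v (x + y) := by
  intro hxy
  rcases hxy.eq_zero_and_eq_one_or with ⟨h₁, h₂⟩ | ⟨h₁, h₂⟩
  · exact hgood _ (isBadSubgraph_triangle h0 hx hy h₁ h₂)
  · refine hgood {0, y, x + y} (isBadSubgraph_neg_comp_iff.mp ?_)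
    exact isBadSubgraph_triangle (v := fun i => v (-i)) (by simpa) hx.neg hy.neg h₂
      (by simpa using h₁)

theorem isNoWay_add_of_isOneWay [DecidableEq G] (h0 : v 0 = 0)
    (hgood : ∀ S : Finset G, ¬ IsBadSubgraph v S) {u b : G} (hu : IsNoWay v u)
    (hb : IsOneWay v b) (hub : ¬ IsOneWay v (u + b)) :
    IsNoWay v (u + b) := by
  refine (isTwoWay_or_isNoWay_of_not_isOneWay hub).resolve_left fun h => ?_
  have := not_isOneWay_add h0 hgood hu.neg h
  rw [neg_add_cancel_left] at this
  exact this hb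

end CayleyDigraph

namespace ZMod

variable {p : ℕ} [Fact p.Prime]

theorem forall_of_add_closed {δ : ZMod p} (hδ : δ ≠ 0) {X : ZMod p → Prop}
    (hX : ∀ z, X z → X (z + δ)) {z₀ : ZMod p} (h₀ : X z₀) (y : ZMod p) : X y := by
  have h : ∀ k : ℕ, X (z₀ + k * δ) := by
    intro k
    induction k with
    | zero => simpa using h₀
    | succ k ih => simpa [add_mul, add_assoc] using hX _ ih
  simpa [div_mul_cancel₀ _ hδ] using h ((y - z₀) / δ).val

/-- Cauchy–Davenport leaves room for at most one missing element of `T ∪ B` in `T + B`, while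
a missing `t` would force `-t ≠ t` to be missing as well. -/
theorem subset_add_of_add_subset_union (hodd : Odd p) {T B : Finset (ZMod p)} (hT : T.Nonempty)
    (hB : B.Nonempty) (hTneg : -T = T) (hBneg : -B = B) (h0 : 0 ∉ T ∪ B)
    (hsub : T + B ⊆ T ∪ B) : T ⊆ T + B := by
  intro t ht
  by_contra hnot
  have htT : t ∈ T ∪ B := mem_union_left _ ht
  have hnt : -t ∉ T + B := fun h => by
    have := neg_mem_neg h
    rw [neg_neg, neg_add, hTneg, hBneg] at this
    exact hnot this
  have ht_ne : -t ≠ t := by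
    rw [Ne, ZMod.neg_eq_self_iff, not_or]
    refine ⟨fun h => h0 (h ▸ htT), fun h => ?_⟩
    obtain ⟨m, hm⟩ := hodd
    omega
  have hsub' : T + B ⊆ ((T ∪ B).erase t).erase (-t) := fun z hz =>
    mem_erase.mpr ⟨fun h => hnt (h ▸ hz), mem_erase.mpr ⟨fun h => hnot (h ▸ hz), hsub hz⟩⟩
  have hcard := card_le_card hsub'
  rw [card_erase_of_mem (mem_erase.mpr ⟨ht_ne, mem_union_left _ (hTneg ▸ neg_mem_neg ht)⟩),
    card_erase_of_mem htT] at hcard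
  have hunion : #(T ∪ B) ≤ p - 1 := by
    simpa using card_le_card (subset_erase.mpr ⟨subset_univ _, h0⟩ : T ∪ B ⊆ univ.erase 0)
  have hCD := (cauchy_davenport (Fact.out : p.Prime) hT hB).trans hcard
  have := card_union_le T B
  have : 0 < #(T ∪ B) := card_pos.mpr ⟨t, htT⟩
  have := hT.card_pos
  have := hB.card_pos
  omega

end ZMod

section CayleyZMod

variable {p : ℕ} [Fact p.Prime] {v : ZMod p → ZMod 2}

theorem exists_add_eq_of_isTwoWay (hodd : Odd p) (h0 : v 0 = 0)
    (hgood : ∀ S : Finset (ZMod p), ¬ IsBadSubgraph v S) (hB : ∃ w, IsOneWay v w) {y : ZMod p}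
    (hy : IsTwoWay v y) : ∃ a b, IsTwoWay v a ∧ IsOneWay v b ∧ a + b = y := by
  classical
  obtain ⟨w, hw⟩ := hB
  have hsub : univ.filter (IsTwoWay v) ⊆ univ.filter (IsTwoWay v) + univ.filter (IsOneWay v) := by
    refine ZMod.subset_add_of_add_subset_union hodd ⟨y, by simpa⟩ ⟨w, by simpa⟩
      (by ext; simp [isTwoWay_neg]) (by ext; simp [isOneWay_neg])
      (by simp [IsOneWay, IsTwoWay, h0]) fun z hz => ?_
    obtain ⟨a, ha, b, hb, rfl⟩ := mem_add.mp hz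
    simp only [mem_union, mem_filter_univ] at ha hb ⊢
    refine or_iff_not_imp_right.mpr fun hab =>
      (isTwoWay_or_isNoWay_of_not_isOneWay hab).resolve_right fun hN => ?_
    have := not_isOneWay_add h0 hgood hN ha.neg
    rw [add_neg_cancel_comm] at this
    exact this hb
  obtain ⟨a, ha, b, hb, hab⟩ := mem_add.mp (hsub (by simpa))
  exact ⟨a, b, by simpa using ha, by simpa using hb, hab⟩

/-- Writing `y = a + b` with `a` two-way and `b` one-way, the property "`u` and `u + y` are both
no-way" is preserved by `u ↦ u + b`, so it would spread to all of `ZMod p`, including `u = y`. -/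
theorem isTwoWay_add_of_isNoWay (hodd : Odd p) (h0 : v 0 = 0)
    (hgood : ∀ S : Finset (ZMod p), ¬ IsBadSubgraph v S) (hB : ∃ w, IsOneWay v w) {y z : ZMod p}
    (hy : IsTwoWay v y) (hz : IsNoWay v z) : IsTwoWay v (z + y) := by
  obtain ⟨a, b, ha, hb, rfl⟩ := exists_add_eq_of_isTwoWay hodd h0 hgood hB hy
  have hstep : ∀ u, IsNoWay v u ∧ IsNoWay v (u + (a + b)) →
      IsNoWay v (u + b) ∧ IsNoWay v (u + b + (a + b)) := by
    rintro u ⟨hu, huy⟩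
    have hub : IsNoWay v (u + b) := isNoWay_add_of_isOneWay h0 hgood hu hb <| by
      convert not_isOneWay_add h0 hgood huy ha.neg using 2; abel
    refine ⟨hub, ?_⟩
    rw [add_right_comm]
    exact isNoWay_add_of_isOneWay h0 hgood huy hb <| by
      convert not_isOneWay_add h0 hgood hub hy using 2; abel
  by_contra hzy
  have hzy' : IsNoWay v (z + (a + b)) :=
    (isTwoWay_or_isNoWay_of_not_isOneWay (not_isOneWay_add h0 hgood hz hy)).resolve_left hzy
  exact hy.not_isNoWay (ZMod.forall_of_add_closed hb.ne_zero hstep ⟨hz, hzy'⟩ (a + b)).1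

theorem exists_isBadSubgraph (hodd : Odd p) (h0 : v 0 = 0) (hB : ∃ w, IsOneWay v w)
    (hT : ∃ y, IsTwoWay v y) (hN : ∃ c, c ≠ 0 ∧ IsNoWay v c) :
    ∃ S : Finset (ZMod p), IsBadSubgraph v S := by
  by_contra! hgood
  obtain ⟨y, hy⟩ := hT
  obtain ⟨c, hc0, hc⟩ := hN
  have hclosed : ∀ u, IsTwoWay v u → IsTwoWay v (u + c) := fun u hu => by
    rw [add_comm]; exact isTwoWay_add_of_isNoWay hodd h0 hgood hB hu hc
  exact (ZMod.forall_of_add_closed hc0 hclosed hy 0).ne_zero h0 rfl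

end CayleyZMod

theorem Finset.odd_card_filter_eq_one_iff {ι : Type*} (s : Finset ι) (f : ι → ZMod 2) :
    Odd #(s.filter (f · = 1)) ↔ ∑ i ∈ s, f i = 1 := by
  have hboole : ∀ a : ZMod 2, (if a = 1 then 1 else 0) = a := by decide
  simp only [← ZMod.natCast_eq_one_iff_odd, ← sum_boole, hboole]

theorem cshift_iterate_apply {n : ℕ} (x : ZMod n → ZMod 2) (k : ℕ) (i : ZMod n) :
    cshift^[k] x i = x (i - k) := by
  induction k generalizing i with
  | zero => simp
  | succ k ih =>
    rw [Function.iterate_succ_apply', cshift, ih, Nat.cast_succ, sub_sub, add_comm]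

section Shift

variable {n : ℕ} [NeZero n]

theorem dot_cshift_iterate (w x : ZMod n → ZMod 2) (k : ℕ) :
    dot w (cshift^[k] x) = dot (fun i => w (i + (k : ZMod n))) x := by
  simp only [dot, cshift_iterate_apply]
  exact Fintype.sum_equiv (Equiv.subRight (k : ZMod n)) _ _ fun i => by simp

theorem dot_ehat_add (c : ZMod n) (x : ZMod n → ZMod 2) :
    dot (fun i => ehat n (i + c)) x = ∑ i, x i - x (-c) := by
  simp only [dot, ehat, add_eq_zero_iff_eq_neg, ite_mul, zero_mul, one_mul]
  rw [eq_sub_iff_add_eq, ← Fintype.sum_ite_eq' (-c) x, ← sum_add_distrib]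
  exact sum_congr rfl fun i _ => by split_ifs <;> simp

theorem dot_indicator_eq_sum (w : ZMod n → ZMod 2) (S : Finset (ZMod n)) :
    dot w (fun i => if i ∈ S then 1 else 0) = ∑ i ∈ S, w i := by
  simp [dot]

theorem sum_indicator_eq_card (S : Finset (ZMod n)) :
    ∑ i, (if i ∈ S then 1 else 0 : ZMod 2) = #S := by
  simp

theorem not_workTogether2_ehat {v x : ZMod n → ZMod 2} (hx : ∑ i, x i = 1)
    (hv : ∀ c, x (-c) = 1 → dot (fun i => v (i + c)) x = 1) : ¬ WorkTogether2 v (ehat n) := by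
  intro h
  obtain ⟨k, hvk, hek⟩ := h x
  rw [dot_cshift_iterate] at hvk hek
  rw [dot_ehat_add, hx, sub_eq_zero] at hek
  exact zero_ne_one (hvk.symm.trans (hv _ hek.symm))

theorem not_workTogether2_ehat_of_isBadSubgraph {v : ZMod n → ZMod 2} {S : Finset (ZMod n)}
    (hS : IsBadSubgraph v S) : ¬ WorkTogether2 v (ehat n) := by
  obtain ⟨hcard, hout | hin⟩ := hS
  · refine not_workTogether2_ehat (x := fun i => if i ∈ S then 1 else 0)
      (by rw [sum_indicator_eq_card, ZMod.natCast_eq_one_iff_odd]; exact hcard) fun c hc => ?_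
    have := hout (-c) (by simpa using hc)
    simp only [sub_neg_eq_add, Finset.odd_card_filter_eq_one_iff] at this
    rwa [dot_indicator_eq_sum]
  · refine not_workTogether2_ehat (x := fun i => if i ∈ -S then 1 else 0)
      (by rw [sum_indicator_eq_card, card_neg, ZMod.natCast_eq_one_iff_odd]; exact hcard)
      fun c hc => ?_
    have := hin c (by simpa using hc)
    rw [Finset.odd_card_filter_eq_one_iff] at this
    rw [dot_indicator_eq_sum, ← image_neg_eq_neg, sum_image neg_injective.injOn]
    simpa [sub_eq_neg_add] using this

end Shift

/-- Let `p` be an odd prime and `v ∈ 𝔽₂ᵖ` a non-symmetric vector with `v 0 = 0`. Suppose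
there exist simultaneously `i` with `v i = v (-i) = 1` and `j ≠ 0` with `v j = v (-j) = 0`.
Then there is a subset `S ⊆ ℤ/pℤ` of odd cardinality such that either every `i ∈ S` has an
odd number of `j ∈ S` with `v (j - i) = 1` (odd outdegree in the induced subgraph of the
Cayley digraph `G_v`), or every `i ∈ S` has an odd number of `j ∈ S` with `v (i - j) = 1`
(odd indegree). In particular, `v` and `ê` do not work together. -/
theorem bad_subgraph_of_twoway_edge (p : ℕ) [NeZero p] (hp : p.Prime) (hodd : Odd p)
    (v : ZMod p → ZMod 2) (h0 : v 0 = 0) (hnonsym : ¬ ∀ i : ZMod p, v i = v (-i))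
    (hi : ∃ i : ZMod p, v i = 1 ∧ v (-i) = 1)
    (hj : ∃ j : ZMod p, j ≠ 0 ∧ v j = 0 ∧ v (-j) = 0) :
    (∃ S : Finset (ZMod p), Odd S.card ∧
        ((∀ i ∈ S, Odd (S.filter (fun j => v (j - i) = 1)).card) ∨
         (∀ i ∈ S, Odd (S.filter (fun j => v (i - j) = 1)).card))) ∧
      ¬ WorkTogether2 v (ehat p) := by
  have := Fact.mk hp
  obtain ⟨S, hS⟩ := exists_isBadSubgraph hodd h0 (not_forall.mp hnonsym) hi hj
  exact ⟨⟨S, hS⟩, not_workTogether2_ehat_of_isBadSubgraph hS⟩
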